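/- arXiv:2512.00813 — 3 statements merged into one kernel-verified Lean document; each statement's English description precedes it below -/
import Mathlib

section
/- Let G and H be connected graphs, each with at least two vertices, and let W be a resolving set of the lexicographic product G∘H. Then for every vertex g of G, the set {h ∈ V(H) : (g,h) ∈ W} is a resolving set of H. -/
/-- The lexicographic product of two simple graphs. -/
def lexProd {α β : Type*} (G : SimpleGraph α) (H : SimpleGraph β) :
    SimpleGraph (α × β) where
  Adj p q := G.Adj p.1 q.1 ∨ (p.1 = q.1 ∧ H.Adj p.2 q.2)
  symm := ⟨by
    rintro ⟨g, h⟩ ⟨g', h'⟩ (hg | ⟨rfl, hh⟩)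
    · exact Or.inl hg.symm
    · exact Or.inr ⟨rfl, hh.symm⟩⟩
  loopless := ⟨by
    rintro ⟨g, h⟩ (hg | ⟨-, hh⟩)
    · exact G.irrefl hg
    · exact H.irrefl hh⟩

/-- `W` is a resolving set of `G`. -/
def IsResolvingSet {α : Type*} (G : SimpleGraph α) (W : Set α) : Prop :=
  ∀ x y : α, x ≠ y → ∃ z ∈ W, G.dist x z ≠ G.dist y z

/-- `S` is a locating set of `G`. -/
def IsLocatingSet {α : Type*} (G : SimpleGraph α) (S : Set α) : Prop :=
  ∀ u ∉ S, ∀ v ∉ S, u ≠ v → G.neighborSet u ∩ S ≠ G.neighborSet v ∩ S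

/-- `S` is a strictly locating set of `G`. -/
def IsStrictlyLocatingSet {α : Type*} (G : SimpleGraph α) (S : Set α) : Prop :=
  IsLocatingSet G S ∧ ∀ u ∉ S, G.neighborSet u ∩ S ≠ S

/-- `S` is a dominating set of `G`. -/
def IsDominatingSet {α : Type*} (G : SimpleGraph α) (S : Set α) : Prop :=
  ∀ v ∉ S, ∃ u ∈ S, G.Adj v u

/-- `u` and `v` are true twins in `G`. -/
def AreTrueTwins {α : Type*} (G : SimpleGraph α) (u v : α) : Prop :=
  G.Adj u v ∧ G.neighborSet u \ {v} = G.neighborSet v \ {u}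

/-- `u` and `v` are false twins in `G`. -/
def AreFalseTwins {α : Type*} (G : SimpleGraph α) (u v : α) : Prop :=
  u ≠ v ∧ ¬ G.Adj u v ∧ G.neighborSet u \ {v} = G.neighborSet v \ {u}

/-- The path on `n` vertices `0, 1, …, n-1` (vertex `i` represents the
vertex labelled `i+1` in `{1, …, n}`). -/
def PathG (n : ℕ) : SimpleGraph (Fin n) where
  Adj i j := (i : ℕ) + 1 = (j : ℕ) ∨ (j : ℕ) + 1 = (i : ℕ)
  symm := ⟨fun i j h => Or.symm h⟩
  loopless := ⟨fun i h => by rcases h with h | h <;> omega⟩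

/-- The cycle on `n` vertices `0, 1, …, n-1` (vertex `i` represents the
vertex labelled `i+1` in `{1, …, n}`). -/
def CycleG (n : ℕ) : SimpleGraph (Fin n) where
  Adj i j := i ≠ j ∧ (((i : ℕ) + 1) % n = (j : ℕ) ∨ ((j : ℕ) + 1) % n = (i : ℕ))
  symm := ⟨fun i j h => ⟨h.1.symm, Or.symm h.2⟩⟩
  loopless := ⟨fun i h => h.1 rfl⟩

/-- The metric dimension of `G`: the minimum cardinality of a resolving set. -/
noncomputable def metricDim {α : Type*} [Fintype α] (G : SimpleGraph α) : ℕ :=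
  sInf {n | ∃ W : Finset α, W.card = n ∧ IsResolvingSet G ↑W}

/-- The set `W ⊆ Fin n` contains the vertex with underlying value `k`. -/
def valMem {n : ℕ} (W : Set (Fin n)) (k : ℕ) : Prop :=
  ∃ x ∈ W, (x : ℕ) = k

/-
In `G ∘ H` two vertices in different `H`-layers are at the distance of their `G`-components,
whatever their `H`-components, while two vertices `(g, a)`, `(g, b)` in the same layer are at
distance `min (d_H(a, b)) 2`, the detour through a neighbour of `g` having length two. So a
landmark outside the layer of `g` never separates two vertices of that layer, and a landmark
`(g, z)` inside it separates `(g, a)` from `(g, b)` only if `z` separates `a` from `b` in `H`.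
-/

open SimpleGraph

section LexProd

variable {α β : Type*} {G : SimpleGraph α} {H : SimpleGraph β}

@[simp]
lemma lexProd_adj {p q : α × β} :
    (lexProd G H).Adj p q ↔ G.Adj p.1 q.1 ∨ (p.1 = q.1 ∧ H.Adj p.2 q.2) :=
  Iff.rfl

lemma lexProd_adj_of_adj_fst {g g' : α} (hg : G.Adj g g') (h h' : β) :
    (lexProd G H).Adj (g, h) (g', h') :=
  Or.inl hg

lemma exists_walk_fst_of_lexProd_walk {x y : α × β} (p : (lexProd G H).Walk x y) :
    ∃ q : G.Walk x.1 y.1, q.length ≤ p.length := by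
  induction p with
  | nil => exact ⟨Walk.nil, le_rfl⟩
  | cons hadj p ih =>
    obtain ⟨q, hq⟩ := ih
    rw [Walk.length_cons]
    rcases hadj with hadj | ⟨heq, -⟩
    · exact ⟨Walk.cons hadj q, by rw [Walk.length_cons]; omega⟩
    · exact ⟨q.copy heq.symm rfl, by rw [Walk.length_copy]; omega⟩

lemma exists_lexProd_walk_of_walk {g g' : α} (p : G.Walk g g') (hne : g ≠ g') (h h' : β) :
    ∃ q : (lexProd G H).Walk (g, h) (g', h'), q.length ≤ p.length := by
  induction p generalizing h with
  | nil => exact absurd rfl hne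
  | @cons u v w hadj p ih =>
    rw [Walk.length_cons]
    by_cases hv : v = w
    · subst hv
      exact ⟨Walk.cons (lexProd_adj_of_adj_fst hadj h h') Walk.nil, by simp⟩
    · obtain ⟨q, hq⟩ := ih hv h'
      exact ⟨Walk.cons (lexProd_adj_of_adj_fst hadj h h') q, by rw [Walk.length_cons]; omega⟩

lemma lexProd_dist_of_fst_ne {g g' : α} (hne : g ≠ g') (h h' : β) :
    (lexProd G H).dist (g, h) (g', h') = G.dist g g' := by
  by_cases hreach : G.Reachable g g'
  · obtain ⟨p, hp⟩ := hreach.exists_walk_length_eq_dist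
    obtain ⟨q, hq⟩ := exists_lexProd_walk_of_walk (H := H) p hne h h'
    obtain ⟨r, hr⟩ := q.reachable.exists_walk_length_eq_dist
    obtain ⟨s, hs⟩ := exists_walk_fst_of_lexProd_walk r
    have hle : (lexProd G H).dist (g, h) (g', h') ≤ G.dist g g' :=
      (dist_le q).trans (hq.trans_eq hp)
    have hge : G.dist g g' ≤ (lexProd G H).dist (g, h) (g', h') :=
      (dist_le s).trans (hs.trans_eq hr)
    exact le_antisymm hle hge
  · have hreach' : ¬(lexProd G H).Reachable (g, h) (g', h') := fun ⟨r⟩ ↦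
      hreach (exists_walk_fst_of_lexProd_walk r).choose.reachable
    rw [dist_eq_zero_of_not_reachable hreach, dist_eq_zero_of_not_reachable hreach']

lemma lexProd_dist_of_fst_eq {g g₀ : α} (hg : G.Adj g g₀) {a b : β} (hab : H.Reachable a b) :
    (lexProd G H).dist (g, a) (g, b) = min (H.dist a b) 2 := by
  obtain rfl | hne := eq_or_ne a b
  · simp
  let detour : (lexProd G H).Walk (g, a) (g, b) :=
    Walk.cons (lexProd_adj_of_adj_fst hg a a)
      (Walk.cons (lexProd_adj_of_adj_fst hg.symm a b) Walk.nil)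
  have hle : (lexProd G H).dist (g, a) (g, b) ≤ 2 := dist_le detour
  have hpos : 0 < (lexProd G H).dist (g, a) (g, b) :=
    detour.reachable.pos_dist_of_ne (by simpa using hne)
  have hHpos : 0 < H.dist a b := hab.pos_dist_of_ne hne
  have hone : (lexProd G H).dist (g, a) (g, b) = 1 ↔ H.dist a b = 1 := by
    simp [dist_eq_one_iff_adj]
  by_cases h1 : H.dist a b = 1
  · have := hone.mpr h1
    omega
  · have := mt hone.mp h1
    omega

end LexProd

theorem stmt1_general {α β : Type*} (G : SimpleGraph α) (H : SimpleGraph β)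
    (hG : G.Connected) (hH : H.Connected) [Nontrivial α]
    (W : Set (α × β)) (hW : IsResolvingSet (lexProd G H) W) :
    ∀ g : α, IsResolvingSet H {h : β | (g, h) ∈ W} := by
  intro g a b hne
  obtain ⟨g₀, hg₀⟩ := hG.preconnected.exists_adj_of_nontrivial g
  obtain ⟨⟨g', z⟩, hz, hdist⟩ := hW (g, a) (g, b) (by simpa using hne)
  obtain rfl | hg' := eq_or_ne g' g
  · refine ⟨z, hz, fun heq ↦ hdist ?_⟩
    rw [lexProd_dist_of_fst_eq hg₀ (hH a z), lexProd_dist_of_fst_eq hg₀ (hH b z), heq]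
  · exact absurd (by rw [lexProd_dist_of_fst_ne hg'.symm, lexProd_dist_of_fst_ne hg'.symm]) hdist

/-- Every resolving set of `G ∘ H` intersects each `H`-layer in a resolving
set of `H`. -/
theorem stmt1 {α β : Type*} (G : SimpleGraph α) (H : SimpleGraph β)
    (hG : G.Connected) (hH : H.Connected) [Nontrivial α] [Nontrivial β]
    (W : Set (α × β)) (hW : IsResolvingSet (lexProd G H) W) :
    ∀ g : α, IsResolvingSet H {h : β | (g, h) ∈ W} :=
  stmt1_general G H hG hH W hW
end

section
/- Let G be a connected graph with at least two vertices that has no true twins, and let K_2 be the complete graph on two vertices. Then the metric dimension of the lexicographic product G∘K_2 equals the number of vertices of G, i.e., dim(G∘K_2) = n(G). -/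
open SimpleGraph
/-! In `G ∘ K₂` two vertices in different fibres are at the `G`-distance of their first
coordinates. Hence a resolving set must meet every fibre, since
nothing outside the fibre `{g} × K₂` separates its two vertices, which gives `n(G) ≤ dim`.
Conversely one copy `V(G) × {0}` resolves: two vertices of one fibre are told apart by that
fibre's vertex in the copy, non-adjacent `g ≠ g'` by `(g, 0)` (distance at most 1 against at
least 2), and adjacent `g ≠ g'` by a vertex adjacent to exactly one of them, which exists
because `g, g'` are not true twins. -/

open SimpleGraph

section

variable {α β : Type*} {G : SimpleGraph α} {H : SimpleGraph β}

lemma dist_fst_le_length_of_walk_lexProd (hG : G.Connected) {x y : α × β}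
    (w : (lexProd G H).Walk x y) : G.dist x.1 y.1 ≤ w.length := by
  induction w with
  | nil => simp
  | @cons x z y hxz w ih =>
    rw [Walk.length_cons]
    rcases hxz with hxz | ⟨hxz, -⟩
    · have htri : G.dist x.1 y.1 ≤ G.dist x.1 z.1 + G.dist z.1 y.1 := hG.dist_triangle
      rw [dist_eq_one_iff_adj.mpr hxz] at htri
      omega
    · rw [hxz]; omega

lemma lexProd_dist_of_ne (hG : G.Connected) {g h : α} (hgh : g ≠ h) (i j : β) :
    (lexProd G H).dist (g, i) (h, j) = G.dist g h := by
  obtain ⟨p, hp⟩ := (hG g h).exists_walk_length_eq_dist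
  cases p with
  | nil => exact absurd rfl hgh
  | @cons _ g₁ _ hgg₁ q =>
    let layer : G →g lexProd G H := ⟨fun g => (g, j), Or.inl⟩
    let w : (lexProd G H).Walk (g, i) (h, j) := .cons (Or.inl hgg₁) (q.map layer)
    apply le_antisymm
    · calc _ ≤ w.length := dist_le w
        _ = G.dist g h := by
          change (q.map layer).length + 1 = _
          rw [Walk.length_map, ← hp, Walk.length_cons]
    · obtain ⟨w', hw'⟩ := Reachable.exists_walk_length_eq_dist ⟨w⟩
      exact hw' ▸ dist_fst_le_length_of_walk_lexProd hG w'

lemma lexProd_top_dist_fibre [DecidableEq β] (g : α) (i j : β) :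
    (lexProd G (⊤ : SimpleGraph β)).dist (g, i) (g, j) = if i = j then 0 else 1 := by
  split_ifs with hij
  · rw [hij, dist_self]
  · exact dist_eq_one_iff_adj.mpr (Or.inr ⟨rfl, hij⟩)

lemma exists_adj_xor_of_not_areTrueTwins {g g' : α} (hadj : G.Adj g g')
    (htw : ¬ AreTrueTwins G g g') : ∃ u, u ≠ g ∧ u ≠ g' ∧ ¬ (G.Adj g u ↔ G.Adj g' u) := by
  by_contra! h
  refine htw ⟨hadj, Set.ext fun u => ?_⟩
  by_cases hug : u = g
  · subst hug; simp
  by_cases hug' : u = g'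
  · subst hug'; simp
  simp [hug, hug', h u hug hug']

lemma exists_mem_fst_eq_of_isResolvingSet_lexProd (hG : G.Connected) {W : Set (α × β)}
    (hW : IsResolvingSet (lexProd G H) W) (g : α) {i j : β} (hij : i ≠ j) :
    ∃ z ∈ W, z.1 = g := by
  obtain ⟨z, hzW, hz⟩ := hW (g, i) (g, j) (by simpa using hij)
  refine ⟨z, hzW, ?_⟩
  by_contra hzg
  exact hz (by rw [lexProd_dist_of_ne hG (Ne.symm hzg), lexProd_dist_of_ne hG (Ne.symm hzg)])

lemma card_le_card_of_isResolvingSet_lexProd [Fintype α] [DecidableEq α] [Nontrivial β]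
    (hG : G.Connected) {W : Finset (α × β)} (hW : IsResolvingSet (lexProd G H) W) :
    Fintype.card α ≤ W.card := by
  obtain ⟨i, j, hij⟩ := exists_pair_ne β
  have hsurj : Finset.univ ⊆ W.image Prod.fst := fun g _ => by
    obtain ⟨z, hzW, rfl⟩ := exists_mem_fst_eq_of_isResolvingSet_lexProd hG hW g hij
    exact Finset.mem_image_of_mem _ hzW
  exact (Finset.card_le_card hsurj).trans Finset.card_image_le

lemma isResolvingSet_lexProd_top_range (hG : G.Connected)
    (htw : ∀ u v : α, ¬ AreTrueTwins G u v) :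
    IsResolvingSet (lexProd G (⊤ : SimpleGraph (Fin 2))) (Set.range fun g => (g, 0)) := by
  rintro ⟨g, i⟩ ⟨g', i'⟩ hne
  by_cases hgg' : g = g'
  · subst hgg'
    have hii' : i ≠ i' := fun h => hne (h ▸ rfl)
    refine ⟨(g, 0), ⟨g, rfl⟩, ?_⟩
    rw [lexProd_top_dist_fibre, lexProd_top_dist_fibre]
    fin_cases i <;> fin_cases i' <;> simp_all
  by_cases hadj : G.Adj g g'
  · obtain ⟨u, hug, hug', hu⟩ := exists_adj_xor_of_not_areTrueTwins hadj (htw g g')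
    refine ⟨(u, 0), ⟨u, rfl⟩, ?_⟩
    rw [lexProd_dist_of_ne hG (Ne.symm hug), lexProd_dist_of_ne hG (Ne.symm hug')]
    exact fun h => hu (by rw [← dist_eq_one_iff_adj, ← dist_eq_one_iff_adj, h])
  · refine ⟨(g, 0), ⟨g, rfl⟩, ?_⟩
    rw [lexProd_top_dist_fibre, lexProd_dist_of_ne hG (Ne.symm hgg')]
    have h0 : G.dist g' g ≠ 0 := (hG.pos_dist_of_ne (Ne.symm hgg')).ne'
    have h1 : G.dist g' g ≠ 1 := fun h => hadj (dist_eq_one_iff_adj.mp h).symm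
    split_ifs <;> omega

lemma metricDim_eq_card_of_isResolvingSet [Fintype α] {W : Finset α} (hW : IsResolvingSet G W)
    (hmin : ∀ W' : Finset α, IsResolvingSet G W' → W.card ≤ W'.card) :
    metricDim G = W.card :=
  le_antisymm (Nat.sInf_le ⟨W, rfl, hW⟩)
    (le_csInf ⟨_, W, rfl, hW⟩ fun _ ⟨W', hW'card, hW'⟩ => hW'card ▸ hmin W' hW')

end

theorem stmt5_general {α : Type*} [Fintype α] (G : SimpleGraph α) (hG : G.Connected)
    (htf : ∀ u v : α, ¬ AreTrueTwins G u v) :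
    metricDim (lexProd G (⊤ : SimpleGraph (Fin 2))) = Fintype.card α := by
  classical
  let W : Finset (α × Fin 2) := Finset.univ.image fun g => (g, 0)
  have hW : IsResolvingSet (lexProd G ⊤) (W : Set (α × Fin 2)) := by
    simpa [W, Set.image_univ] using isResolvingSet_lexProd_top_range hG htf
  have hWcard : W.card = Fintype.card α :=
    Finset.card_image_of_injective _ fun _ _ h => congrArg Prod.fst h
  rw [← hWcard]
  exact metricDim_eq_card_of_isResolvingSet hW fun W' hW' =>
    hWcard ▸ card_le_card_of_isResolvingSet_lexProd hG hW'

/-- If `G` is connected, nontrivial, and free of true twins, then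
`dim(G ∘ K₂) = n(G)`. -/
theorem stmt5 {α : Type*} [Fintype α] (G : SimpleGraph α) (hG : G.Connected)
    [Nontrivial α] (htf : ∀ u v : α, ¬ AreTrueTwins G u v) :
    metricDim (lexProd G (⊤ : SimpleGraph (Fin 2))) = Fintype.card α :=
  stmt5_general G hG htf
end

section
/- Let G be a connected graph with at least two vertices in which no two distinct vertices are twins, and let P_3 be the path with vertex set {1,2,3}. Then for every function s : V(G) → {1,3}, the set S = {(g, s(g)) : g ∈ V(G)} is a resolving set of the lexicographic product G∘P_3. -/
/-!
Call the vertices `(g, s g)` landmarks. Two vertices in different layers `g ≠ g'` are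
separated by the landmark in the layer of a vertex `a ∉ {g, g'}` adjacent to exactly one of
`g`, `g'`, which exists because `G` is twin-free: one of the two vertices is at distance `1`
from that landmark, the other is not. Two vertices in the same layer are separated by that
layer's own landmark, an end of `P₃`: it is at distance `0` from itself, at distance `1` from
the middle vertex and at distance at least `2` from the other end.
-/

namespace SimpleGraph

variable {V : Type*} {G : SimpleGraph V}

lemma dist_ne_of_adj_of_not_adj {x y z : V} (hx : G.Adj x z) (hy : ¬G.Adj y z) :
    G.dist x z ≠ G.dist y z := by
  rw [dist_eq_one_iff_adj.mpr hx]
  exact fun h => hy (dist_eq_one_iff_adj.mp h.symm)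

lemma exists_adj_not_adj_of_neighborSet_sdiff_ne {u v : V}
    (h : G.neighborSet u \ {v} ≠ G.neighborSet v \ {u}) :
    ∃ a, (G.Adj u a ∧ ¬G.Adj v a ∧ v ≠ a) ∨ (G.Adj v a ∧ ¬G.Adj u a ∧ u ≠ a) := by
  obtain ⟨a, ha⟩ := not_forall.mp (mt Set.ext h)
  simp only [Set.mem_sdiff, mem_neighborSet, Set.mem_singleton_iff] at ha
  have hu : ¬G.Adj u u := G.irrefl
  have hv : ¬G.Adj v v := G.irrefl
  refine ⟨a, ?_⟩
  by_cases hau : a = u <;> by_cases hav : a = v <;> subst_vars <;> tauto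

end SimpleGraph

lemma PathG_eq_pathGraph (n : ℕ) : PathG n = SimpleGraph.pathGraph n := by
  ext
  simp [PathG, SimpleGraph.pathGraph_adj]

lemma PathG_three_adj_end_iff {e h : Fin 3} (he : e = 0 ∨ e = 2) (hh : h ≠ e) :
    (PathG 3).Adj h e ↔ h = 1 := by
  rcases he with rfl | rfl <;> fin_cases h <;> simp_all [PathG]

section lexProd

variable {α β : Type*} {G : SimpleGraph α} {H : SimpleGraph β}

lemma lexProd_adj_iff_of_fst_ne {g g' : α} (hg : g ≠ g') (b b' : β) :
    (lexProd G H).Adj (g, b) (g', b') ↔ G.Adj g g' := by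
  simp [lexProd, hg]

lemma lexProd_adj_same_fst_iff (g : α) (b b' : β) :
    (lexProd G H).Adj (g, b) (g, b') ↔ H.Adj b b' := by
  simp [lexProd]

lemma lexProd_reachable_same_fst (g : α) {b b' : β} (h : H.Reachable b b') :
    (lexProd G H).Reachable (g, b) (g, b') := by
  let layer : H →g lexProd G H := ⟨fun b => (g, b), fun h => Or.inr ⟨rfl, h⟩⟩
  exact h.map layer

lemma lexProd_dist_ne_of_adj_of_not_adj {g g' a : α} (hg : G.Adj g a) (hg' : ¬G.Adj g' a)
    (hne : g' ≠ a) (b b' c : β) :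
    (lexProd G H).dist (g, b) (a, c) ≠ (lexProd G H).dist (g', b') (a, c) :=
  SimpleGraph.dist_ne_of_adj_of_not_adj (Or.inl hg) (by rwa [lexProd_adj_iff_of_fst_ne hne])

lemma lexProd_exists_dist_ne_of_neighborSet_sdiff_ne (t : α → β) {g g' : α}
    (h : G.neighborSet g \ {g'} ≠ G.neighborSet g' \ {g}) (b b' : β) :
    ∃ z ∈ Set.range fun a => (a, t a),
      (lexProd G H).dist (g, b) z ≠ (lexProd G H).dist (g', b') z := by
  obtain ⟨a, ⟨hga, hg'a, hne⟩ | ⟨hg'a, hga, hne⟩⟩ :=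
    SimpleGraph.exists_adj_not_adj_of_neighborSet_sdiff_ne h
  · exact ⟨_, ⟨a, rfl⟩, lexProd_dist_ne_of_adj_of_not_adj hga hg'a hne b b' (t a)⟩
  · exact ⟨_, ⟨a, rfl⟩, (lexProd_dist_ne_of_adj_of_not_adj hg'a hga hne b' b (t a)).symm⟩

lemma lexProd_PathG_three_dist_end_ne (g : α) {e : Fin 3} (he : e = 0 ∨ e = 2) {h h' : Fin 3}
    (hh : h ≠ h') :
    (lexProd G (PathG 3)).dist (g, h) (g, e) ≠ (lexProd G (PathG 3)).dist (g, h') (g, e) := by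
  have reach (k : Fin 3) : (lexProd G (PathG 3)).Reachable (g, k) (g, e) := by
    apply lexProd_reachable_same_fst
    rw [PathG_eq_pathGraph]
    exact (SimpleGraph.pathGraph_connected 2).preconnected k e
  have adj_iff {k : Fin 3} (hk : k ≠ e) : (lexProd G (PathG 3)).Adj (g, k) (g, e) ↔ k = 1 := by
    rw [lexProd_adj_same_fst_iff, PathG_three_adj_end_iff he hk]
  by_cases hhe : h = e
  · subst hhe
    rw [SimpleGraph.dist_self]
    exact ((reach h').pos_dist_of_ne (by simpa using Ne.symm hh)).ne
  by_cases hh'e : h' = e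
  · subst hh'e
    rw [SimpleGraph.dist_self]
    exact ((reach h).pos_dist_of_ne (by simpa using hh)).ne'
  have h_or_h'_mid : h = 1 ∨ h' = 1 := by
    rcases he with rfl | rfl <;> fin_cases h <;> fin_cases h' <;> simp_all
  rcases h_or_h'_mid with rfl | rfl
  · exact SimpleGraph.dist_ne_of_adj_of_not_adj ((adj_iff hhe).mpr rfl)
      (by rwa [adj_iff hh'e, eq_comm])
  · exact (SimpleGraph.dist_ne_of_adj_of_not_adj ((adj_iff hh'e).mpr rfl)
      (by rwa [adj_iff hhe])).symm

end lexProd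

theorem stmt6_general {α : Type*} (G : SimpleGraph α)
    (htf : ∀ u v : α, u ≠ v → G.neighborSet u \ {v} ≠ G.neighborSet v \ {u})
    (s : α → Fin 3) (hs : ∀ g : α, s g = 0 ∨ s g = 2) :
    IsResolvingSet (lexProd G (PathG 3)) (Set.range fun g => (g, s g)) := by
  rintro ⟨g, h⟩ ⟨g', h'⟩ hne
  by_cases hg : g = g'
  · subst hg
    exact ⟨_, ⟨g, rfl⟩, lexProd_PathG_three_dist_end_ne g (hs g) fun hh => hne (by rw [hh])⟩
  · exact lexProd_exists_dist_ne_of_neighborSet_sdiff_ne s (htf g g' hg) h h'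

/-- If `G` is connected, nontrivial and twin-free, then picking the first or
the third vertex from each `P₃`-layer yields a resolving set of `G ∘ P₃`.
(Vertices `1` and `3` of `P₃` are `0` and `2` in the `Fin 3` labelling.) -/
theorem stmt6 {α : Type*} (G : SimpleGraph α) (hG : G.Connected) [Nontrivial α]
    (htf : ∀ u v : α, u ≠ v → G.neighborSet u \ {v} ≠ G.neighborSet v \ {u})
    (s : α → Fin 3) (hs : ∀ g : α, s g = 0 ∨ s g = 2) :
    IsResolvingSet (lexProd G (PathG 3)) (Set.range fun g => (g, s g)) :=
  stmt6_general G htf s hs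
end
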